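/- arXiv:2408.00262 — 2 statements merged into one kernel-verified Lean document; each statement's English description precedes it below -/
import Mathlib

section
/- Characterisation of conservativity: let Ax ⊆ {N_◇, C_◇, I_◇□}. The diamond-free fragment of CK ⊕ Ax coincides with that of CK (i.e. for all diamond-free Γ and φ, Γ ⊢_{CK⊕Ax} φ iff Γ ⊢_CK φ) if and only if N_◇ ∉ Ax or I_◇□ ∉ Ax. In particular, the diamond-free formula ¬¬□⊥ → □⊥ is derivable in CK ⊕ N_◇ ⊕ I_◇□ but not in CK. -/
/-- Formulas of the modal language L. -/
inductive Form : Type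
  | var : ℕ → Form
  | bot : Form
  | and : Form → Form → Form
  | or : Form → Form → Form
  | imp : Form → Form → Form
  | box : Form → Form
  | dia : Form → Form

namespace Form

/-- Negation abbreviation: ¬φ := φ → ⊥. -/
def neg (φ : Form) : Form := φ.imp bot

/-- Uniform substitution. -/
def subst (σ : ℕ → Form) : Form → Form
  | var p => σ p
  | bot => bot
  | and a b => and (a.subst σ) (b.subst σ)
  | or a b => or (a.subst σ) (b.subst σ)
  | imp a b => imp (a.subst σ) (b.subst σ)
  | box a => box (a.subst σ)
  | dia a => dia (a.subst σ)

end Form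

/-- Substitution instances of the axioms of a standard Hilbert axiomatisation
of intuitionistic propositional logic (the axioms are schematic, so all
substitution instances are included). -/
inductive IPLAx : Form → Prop
  | a1 (φ ψ : Form) : IPLAx (φ.imp (ψ.imp φ))
  | a2 (φ ψ χ : Form) : IPLAx ((φ.imp (ψ.imp χ)).imp ((φ.imp ψ).imp (φ.imp χ)))
  | a3 (φ ψ : Form) : IPLAx ((φ.and ψ).imp φ)
  | a4 (φ ψ : Form) : IPLAx ((φ.and ψ).imp ψ)
  | a5 (φ ψ : Form) : IPLAx (φ.imp (ψ.imp (φ.and ψ)))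
  | a6 (φ ψ : Form) : IPLAx (φ.imp (φ.or ψ))
  | a7 (φ ψ : Form) : IPLAx (ψ.imp (φ.or ψ))
  | a8 (φ ψ χ : Form) : IPLAx ((φ.imp χ).imp ((ψ.imp χ).imp ((φ.or ψ).imp χ)))
  | a9 (φ : Form) : IPLAx (Form.bot.imp φ)

/-- Substitution instances of K_□ : □(φ→ψ) → (□φ → □ψ). -/
def KBoxAx (χ : Form) : Prop :=
  ∃ φ ψ : Form, χ = ((φ.imp ψ).box).imp ((φ.box).imp (ψ.box))

/-- Substitution instances of K_◇ : □(φ→ψ) → (◇φ → ◇ψ). -/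
def KDiaAx (χ : Form) : Prop :=
  ∃ φ ψ : Form, χ = ((φ.imp ψ).box).imp ((φ.dia).imp (ψ.dia))

/-- Axiom instances available in the calculus CK ⊕ Ax : instances of IPL
axioms, of K_□, of K_◇, or substitution instances of members of Ax. -/
def AxInst (Ax : Set Form) (φ : Form) : Prop :=
  IPLAx φ ∨ KBoxAx φ ∨ KDiaAx φ ∨ ∃ ψ ∈ Ax, ∃ σ : ℕ → Form, φ = ψ.subst σ

/-- The generalised Hilbert calculus CK ⊕ Ax deriving consecutions Γ ⊢_Ax φ:
rules (Ax), (MP), (Nec) and (El). -/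
inductive Prv (Ax : Set Form) : Set Form → Form → Prop
  | ax {Γ : Set Form} {φ : Form} : AxInst Ax φ → Prv Ax Γ φ
  | mp {Γ : Set Form} {φ ψ : Form} : Prv Ax Γ φ → Prv Ax Γ (φ.imp ψ) → Prv Ax Γ ψ
  | nec {Γ : Set Form} {φ : Form} : Prv Ax ∅ φ → Prv Ax Γ φ.box
  | el {Γ : Set Form} {φ : Form} : φ ∈ Γ → Prv Ax Γ φ

/-- The axiom N_◇ : ◇⊥ → ⊥. -/
def NdAx : Form := (Form.bot.dia).imp Form.bot

/-- The axiom N_◇□ : ◇⊥ → □⊥. -/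
def NdbAx : Form := (Form.bot.dia).imp (Form.bot.box)

/-- The axiom C_◇ : ◇(p ∨ q) → ◇p ∨ ◇q. -/
def CdAx : Form :=
  (((Form.var 0).or (Form.var 1)).dia).imp (((Form.var 0).dia).or ((Form.var 1).dia))

/-- The axiom I_◇□ : (◇p → □q) → □(p → q). -/
def IdbAx : Form :=
  (((Form.var 0).dia).imp ((Form.var 1).box)).imp (((Form.var 0).imp (Form.var 1)).box)

/-- A formula is diamond-free if it contains no occurrence of ◇. -/
def DiamondFree : Form → Prop
  | .var _ => True
  | .bot => True
  | .and a b => DiamondFree a ∧ DiamondFree b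
  | .or a b => DiamondFree a ∧ DiamondFree b
  | .imp a b => DiamondFree a ∧ DiamondFree b
  | .box a => DiamondFree a
  | .dia _ => False

section Aux

/-- The formula ⊤ := ⊥ → ⊥. -/
def FTop : Form := Form.bot.imp Form.bot

theorem prv_a1 {Ax Γ} (φ ψ : Form) : Prv Ax Γ (φ.imp (ψ.imp φ)) :=
  .ax (Or.inl (.a1 _ _))

theorem prv_a2 {Ax Γ} (φ ψ χ : Form) :
    Prv Ax Γ ((φ.imp (ψ.imp χ)).imp ((φ.imp ψ).imp (φ.imp χ))) :=
  .ax (Or.inl (.a2 _ _ _))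

theorem prv_a9 {Ax Γ} (φ : Form) : Prv Ax Γ (Form.bot.imp φ) :=
  .ax (Or.inl (.a9 _))

theorem prv_kbox {Ax Γ} (φ ψ : Form) :
    Prv Ax Γ (((φ.imp ψ).box).imp ((φ.box).imp (ψ.box))) :=
  .ax (Or.inr (Or.inl ⟨φ, ψ, rfl⟩))

theorem prv_kdia {Ax Γ} (φ ψ : Form) :
    Prv Ax Γ (((φ.imp ψ).box).imp ((φ.dia).imp (ψ.dia))) :=
  .ax (Or.inr (Or.inr (Or.inl ⟨φ, ψ, rfl⟩)))

theorem prv_id {Ax Γ} (φ : Form) : Prv Ax Γ (φ.imp φ) :=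
  .mp (prv_a1 φ φ) (.mp (prv_a1 φ (φ.imp φ)) (prv_a2 φ (φ.imp φ) φ))

theorem prv_wk1 {Ax Γ} {χ : Form} (φ : Form) (h : Prv Ax Γ χ) : Prv Ax Γ (φ.imp χ) :=
  .mp h (prv_a1 χ φ)

theorem prv_mono_ctx {Ax} : ∀ {Γ φ}, Prv Ax Γ φ → ∀ {Γ' : Set Form}, Γ ⊆ Γ' → Prv Ax Γ' φ := by
  intro Γ φ h
  induction h with
  | ax hx => intro Γ' _; exact .ax hx
  | mp _ _ ih1 ih2 => intro Γ' hs; exact .mp (ih1 hs) (ih2 hs)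
  | nec h _ => intro Γ' _; exact .nec h
  | el hm => intro Γ' hs; exact .el (hs hm)

theorem prv_mono_ax {Ax Ax' : Set Form} (hs : Ax ⊆ Ax') :
    ∀ {Γ φ}, Prv Ax Γ φ → Prv Ax' Γ φ := by
  intro Γ φ h
  induction h with
  | ax hx =>
    rcases hx with h | h | h | ⟨ψ, hψ, σ, rfl⟩
    · exact .ax (Or.inl h)
    · exact .ax (Or.inr (Or.inl h))
    · exact .ax (Or.inr (Or.inr (Or.inl h)))
    · exact .ax (Or.inr (Or.inr (Or.inr ⟨ψ, hs hψ, σ, rfl⟩)))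
  | mp _ _ ih1 ih2 => exact .mp ih1 ih2
  | nec _ ih => exact .nec ih
  | el hm => exact .el hm

theorem prv_ded' {Ax} : ∀ {Δ ψ}, Prv Ax Δ ψ →
    ∀ {Γ : Set Form} {φ : Form}, Δ = insert φ Γ → Prv Ax Γ (φ.imp ψ) := by
  intro Δ ψ h
  induction h with
  | ax hx => intro Γ φ _; exact .mp (.ax hx) (prv_a1 _ _)
  | mp _ _ ih1 ih2 =>
    intro Γ φ hΔ
    exact .mp (ih1 hΔ) (.mp (ih2 hΔ) (prv_a2 _ _ _))
  | nec h _ => intro Γ φ _; exact .mp (.nec h) (prv_a1 _ _)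
  | el hm =>
    intro Γ φ hΔ
    subst hΔ
    rcases Set.mem_insert_iff.mp hm with rfl | hm
    · exact prv_id _
    · exact .mp (.el hm) (prv_a1 _ _)

theorem prv_ded {Ax} {Γ : Set Form} {φ ψ : Form} (h : Prv Ax (insert φ Γ) ψ) :
    Prv Ax Γ (φ.imp ψ) := prv_ded' h rfl

theorem prv_comp {Ax} {Γ : Set Form} {φ ψ χ : Form}
    (h1 : Prv Ax Γ (φ.imp ψ)) (h2 : Prv Ax Γ (ψ.imp χ)) : Prv Ax Γ (φ.imp χ) :=
  prv_ded (.mp (.mp (.el (Set.mem_insert _ _)) (prv_mono_ctx h1 (Set.subset_insert _ _)))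
    (prv_mono_ctx h2 (Set.subset_insert _ _)))

/-! ### Diamond-erasing translation -/

def trc (c : Form) : Form → Form
  | .var p => .var p
  | .bot => .bot
  | .and a b => .and (trc c a) (trc c b)
  | .or a b => .or (trc c a) (trc c b)
  | .imp a b => .imp (trc c a) (trc c b)
  | .box a => .box (trc c a)
  | .dia _ => c

theorem trc_df {c : Form} : ∀ {φ}, DiamondFree φ → trc c φ = φ := by
  intro φ h
  induction φ with
  | var p => rfl
  | bot => rfl
  | and a b iha ihb => exact congrArg₂ Form.and (iha h.1) (ihb h.2)
  | or a b iha ihb => exact congrArg₂ Form.or (iha h.1) (ihb h.2)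
  | imp a b iha ihb => exact congrArg₂ Form.imp (iha h.1) (ihb h.2)
  | box a iha => exact congrArg Form.box (iha h)
  | dia a _ => exact absurd h (by simp [DiamondFree])

theorem prv_trans {Ax : Set Form} {c : Form}
    (hax : ∀ ψ ∈ Ax, ∀ (σ : ℕ → Form) (Γ : Set Form), Prv ∅ Γ (trc c (ψ.subst σ))) :
    ∀ {Γ φ}, Prv Ax Γ φ → Prv ∅ (trc c '' Γ) (trc c φ) := by
  intro Γ φ h
  induction h with
  | ax hx =>
    rcases hx with h | h | h | ⟨ψ, hψ, σ, rfl⟩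
    · cases h with
      | a1 a b => exact .ax (Or.inl (.a1 (trc c a) (trc c b)))
      | a2 a b d => exact .ax (Or.inl (.a2 (trc c a) (trc c b) (trc c d)))
      | a3 a b => exact .ax (Or.inl (.a3 (trc c a) (trc c b)))
      | a4 a b => exact .ax (Or.inl (.a4 (trc c a) (trc c b)))
      | a5 a b => exact .ax (Or.inl (.a5 (trc c a) (trc c b)))
      | a6 a b => exact .ax (Or.inl (.a6 (trc c a) (trc c b)))
      | a7 a b => exact .ax (Or.inl (.a7 (trc c a) (trc c b)))
      | a8 a b d => exact .ax (Or.inl (.a8 (trc c a) (trc c b) (trc c d)))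
      | a9 a => exact .ax (Or.inl (.a9 (trc c a)))
    · obtain ⟨a, b, rfl⟩ := h
      exact .ax (Or.inr (Or.inl ⟨trc c a, trc c b, rfl⟩))
    · obtain ⟨a, b, rfl⟩ := h
      exact prv_wk1 _ (prv_id c)
    · exact hax ψ hψ σ _
  | mp _ _ ih1 ih2 => exact .mp ih1 ih2
  | nec _ ih => exact .nec (by rwa [Set.image_empty] at ih)
  | el hm => exact .el ⟨_, hm, rfl⟩

theorem conserv {Ax : Set Form} {c : Form}
    (hax : ∀ ψ ∈ Ax, ∀ (σ : ℕ → Form) (Γ : Set Form), Prv ∅ Γ (trc c (ψ.subst σ)))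
    {Γ : Set Form} {φ : Form} (hΓ : ∀ ψ ∈ Γ, DiamondFree ψ) (hφ : DiamondFree φ)
    (h : Prv Ax Γ φ) : Prv ∅ Γ φ := by
  have h2 := prv_trans hax h
  rw [trc_df hφ] at h2
  refine prv_mono_ctx h2 ?_
  rintro x ⟨y, hy, rfl⟩
  rw [trc_df (hΓ y hy)]
  exact hy

theorem hax_bot {Ax : Set Form} (hAx : Ax ⊆ {NdAx, CdAx, IdbAx}) (hI : IdbAx ∉ Ax) :
    ∀ ψ ∈ Ax, ∀ (σ : ℕ → Form) (Γ : Set Form), Prv ∅ Γ (trc Form.bot (ψ.subst σ)) := by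
  intro ψ hψ σ Γ
  have hm := hAx hψ
  simp only [Set.mem_insert_iff, Set.mem_singleton_iff] at hm
  rcases hm with rfl | rfl | rfl
  · exact prv_id Form.bot
  · exact prv_a9 (Form.bot.or Form.bot)
  · exact absurd hψ hI

theorem hax_top {Ax : Set Form} (hAx : Ax ⊆ {NdAx, CdAx, IdbAx}) (hN : NdAx ∉ Ax) :
    ∀ ψ ∈ Ax, ∀ (σ : ℕ → Form) (Γ : Set Form), Prv ∅ Γ (trc FTop (ψ.subst σ)) := by
  intro ψ hψ σ Γ
  have hm := hAx hψ
  simp only [Set.mem_insert_iff, Set.mem_singleton_iff] at hm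
  rcases hm with rfl | rfl | rfl
  · exact absurd hψ hN
  · exact .ax (Or.inl (.a6 FTop FTop))
  · show Prv ∅ Γ ((FTop.imp ((trc FTop (σ 1)).box)).imp
      (((trc FTop (σ 0)).imp (trc FTop (σ 1))).box))
    apply prv_ded
    exact .mp (.mp (prv_id Form.bot) (.el (Set.mem_insert _ _)))
      (.mp (.nec (prv_a1 _ _)) (prv_kbox _ _))

/-! ### Derivation of ¬¬□⊥ → □⊥ in CK ⊕ N_◇ ⊕ I_◇□ -/

theorem prv_nd {Γ : Set Form} : Prv {NdAx, IdbAx} Γ ((Form.bot.dia).imp Form.bot) :=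
  .ax (Or.inr (Or.inr (Or.inr ⟨NdAx, Set.mem_insert _ _, Form.var, rfl⟩)))

theorem prv_idb_inst {Γ : Set Form} :
    Prv {NdAx, IdbAx} Γ (((FTop.dia).imp (Form.bot.box)).imp ((FTop.imp Form.bot).box)) :=
  .ax (Or.inr (Or.inr (Or.inr ⟨IdbAx, Set.mem_insert_of_mem _ rfl,
    fun n => match n with | 0 => FTop | _ => Form.bot, rfl⟩)))

theorem prv_boxTB {Γ : Set Form} :
    Prv {NdAx, IdbAx} Γ (((FTop.imp Form.bot).box).imp (Form.bot.box)) :=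
  .mp (.nec (prv_ded (.mp (prv_id Form.bot) (.el (Set.mem_insert _ _)))))
    (prv_kbox _ _)

theorem prv_box_to_nD {Γ : Set Form} :
    Prv {NdAx, IdbAx} Γ ((Form.bot.box).imp ((FTop.dia).imp Form.bot)) := by
  apply prv_ded
  apply prv_ded
  have hB : Prv {NdAx, IdbAx} (insert (FTop.dia) (insert (Form.bot.box) Γ)) (Form.bot.box) :=
    .el (Set.mem_insert_of_mem _ (Set.mem_insert _ _))
  have hD : Prv {NdAx, IdbAx} (insert (FTop.dia) (insert (Form.bot.box) Γ)) (FTop.dia) :=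
    .el (Set.mem_insert _ _)
  have hTB : Prv {NdAx, IdbAx} (insert (FTop.dia) (insert (Form.bot.box) Γ))
      ((FTop.imp Form.bot).box) :=
    .mp hB (.mp (.nec (prv_a9 (FTop.imp Form.bot))) (prv_kbox _ _))
  exact .mp (.mp hD (.mp hTB (prv_kdia FTop Form.bot))) prv_nd

theorem part2 : Prv {NdAx, IdbAx} ∅ (((Form.bot.box).neg.neg).imp (Form.bot.box)) := by
  apply prv_ded
  have ha : Prv {NdAx, IdbAx} (insert ((Form.bot.box).neg.neg) ∅) ((Form.bot.box).neg.neg) :=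
    .el (Set.mem_insert _ _)
  have hnD : Prv {NdAx, IdbAx} (insert ((Form.bot.box).neg.neg) ∅) ((FTop.dia).imp Form.bot) := by
    apply prv_ded
    have hnB : Prv {NdAx, IdbAx} (insert (FTop.dia) (insert ((Form.bot.box).neg.neg) ∅))
        ((Form.bot.box).imp Form.bot) := by
      apply prv_ded
      exact .mp (.el (Set.mem_insert_of_mem _ (Set.mem_insert _ _)))
        (.mp (.el (Set.mem_insert _ _)) prv_box_to_nD)
    exact .mp hnB (prv_mono_ctx ha (Set.subset_insert _ _))
  have hDB : Prv {NdAx, IdbAx} (insert ((Form.bot.box).neg.neg) ∅)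
      ((FTop.dia).imp (Form.bot.box)) := prv_comp hnD (prv_a9 _)
  exact .mp (.mp hDB prv_idb_inst) prv_boxTB

/-! ### Countermodel: Gödel 3-valued semantics -/

def gimp (a b : Fin 3) : Fin 3 := if a ≤ b then 2 else b

def hbox (a : Fin 3) : Fin 3 := if a = 2 then 2 else 1

def ev : Form → Fin 3
  | .var _ => 2
  | .bot => 0
  | .and a b => min (ev a) (ev b)
  | .or a b => max (ev a) (ev b)
  | .imp a b => gimp (ev a) (ev b)
  | .box a => hbox (ev a)
  | .dia _ => 0

theorem ev_sound : ∀ {Γ φ}, Prv ∅ Γ φ → (∀ ψ ∈ Γ, ev ψ = 2) → ev φ = 2 := by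
  intro Γ φ h
  induction h with
  | ax hx =>
    intro _
    rcases hx with h | h | h | ⟨ψ, hψ, _⟩
    · cases h with
      | a1 a b => exact (by decide : ∀ x y : Fin 3, gimp x (gimp y x) = 2) (ev a) (ev b)
      | a2 a b c => exact (by decide : ∀ x y z : Fin 3,
          gimp (gimp x (gimp y z)) (gimp (gimp x y) (gimp x z)) = 2) (ev a) (ev b) (ev c)
      | a3 a b => exact (by decide : ∀ x y : Fin 3, gimp (min x y) x = 2) (ev a) (ev b)
      | a4 a b => exact (by decide : ∀ x y : Fin 3, gimp (min x y) y = 2) (ev a) (ev b)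
      | a5 a b => exact (by decide : ∀ x y : Fin 3, gimp x (gimp y (min x y)) = 2) (ev a) (ev b)
      | a6 a b => exact (by decide : ∀ x y : Fin 3, gimp x (max x y) = 2) (ev a) (ev b)
      | a7 a b => exact (by decide : ∀ x y : Fin 3, gimp y (max x y) = 2) (ev a) (ev b)
      | a8 a b c => exact (by decide : ∀ x y z : Fin 3,
          gimp (gimp x z) (gimp (gimp y z) (gimp (max x y) z)) = 2) (ev a) (ev b) (ev c)
      | a9 a => exact (by decide : ∀ x : Fin 3, gimp 0 x = 2) (ev a)
    · obtain ⟨a, b, rfl⟩ := h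
      exact (by decide : ∀ x y : Fin 3,
        gimp (hbox (gimp x y)) (gimp (hbox x) (hbox y)) = 2) (ev a) (ev b)
    · obtain ⟨a, b, rfl⟩ := h
      exact (by decide : ∀ x y : Fin 3,
        gimp (hbox (gimp x y)) (gimp 0 0) = 2) (ev a) (ev b)
    · exact absurd hψ (Set.notMem_empty _)
  | mp _ _ ih1 ih2 =>
    intro hΓ
    exact (by decide : ∀ x y : Fin 3, x = 2 → gimp x y = 2 → y = 2) _ _ (ih1 hΓ) (ih2 hΓ)
  | nec _ ih =>
    intro _
    have h2 := ih (fun ψ hψ => absurd hψ (Set.notMem_empty _))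
    show hbox _ = 2
    rw [h2]
    rfl
  | el hm => intro hΓ; exact hΓ _ hm

theorem part3 : ¬ Prv ∅ ∅ (((Form.bot.box).neg.neg).imp (Form.bot.box)) := by
  intro h
  have h2 := ev_sound h (fun ψ hψ => absurd hψ (Set.notMem_empty _))
  exact absurd h2 (by decide)

end Aux
/-- Characterisation of conservativity: for Ax ⊆ {N_◇, C_◇, I_◇□}, the
diamond-free fragment of CK ⊕ Ax coincides with that of CK iff N_◇ ∉ Ax or
I_◇□ ∉ Ax; in particular ¬¬□⊥ → □⊥ is derivable in CK ⊕ N_◇ ⊕ I_◇□ but not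
in CK. -/
theorem conservativity_characterisation (Ax : Set Form)
    (hAx : Ax ⊆ {NdAx, CdAx, IdbAx}) :
    ((∀ (Γ : Set Form) (φ : Form), (∀ ψ ∈ Γ, DiamondFree ψ) → DiamondFree φ →
        (Prv Ax Γ φ ↔ Prv ∅ Γ φ)) ↔ (NdAx ∉ Ax ∨ IdbAx ∉ Ax)) ∧
    Prv {NdAx, IdbAx} ∅ (((Form.bot.box).neg.neg).imp (Form.bot.box)) ∧
    ¬ Prv ∅ ∅ (((Form.bot.box).neg.neg).imp (Form.bot.box)) := by
  refine ⟨⟨?_, ?_⟩, part2, part3⟩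
  · intro hcons
    by_contra hcon
    push_neg at hcon
    obtain ⟨hN, hI⟩ := hcon
    have hsub : ({NdAx, IdbAx} : Set Form) ⊆ Ax := by
      intro x hx
      simp only [Set.mem_insert_iff, Set.mem_singleton_iff] at hx
      rcases hx with rfl | rfl
      · exact hN
      · exact hI
    have h2 : Prv Ax ∅ (((Form.bot.box).neg.neg).imp (Form.bot.box)) :=
      prv_mono_ax hsub part2
    have hdf : DiamondFree (((Form.bot.box).neg.neg).imp (Form.bot.box)) :=
      ⟨⟨⟨trivial, trivial⟩, trivial⟩, trivial⟩
    exact part3 ((hcons ∅ _ (fun ψ hψ => absurd hψ (Set.notMem_empty _)) hdf).mp h2)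
  · intro hor Γ φ hΓ hφ
    refine ⟨fun h => ?_, fun h => prv_mono_ax (Set.empty_subset _) h⟩
    rcases hor with hN | hI
    · exact conserv (hax_top hAx hN) hΓ hφ h
    · exact conserv (hax_bot hAx hI) hΓ hφ h
end

section
/- Correspondence for the weak normality axiom N_◇□: a CK-frame (X, e, ≤, R) validates every instance of the axiom N_◇□: ◇⊥ → □⊥ if and only if it satisfies (Ndb-corr): for all x, if yRe holds for all y with x ≤ y, then for all y, z with x ≤ y and yRz we have z = e. Moreover, the simpler condition (Ndb-suff): for all x, y, if xRe and xRy then y = e, implies that the frame validates every instance of N_◇□. -/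
/-- A CK-frame (X, e, ≤, R): ≤ is a preorder, e is ≤-maximal (an "exploding"
world), and e R x iff x = e. -/
structure CKFrame where
  W : Type
  le : W → W → Prop
  R : W → W → Prop
  e : W
  le_refl : ∀ x : W, le x x
  le_trans : ∀ {x y z : W}, le x y → le y z → le x z
  e_max : ∀ {x : W}, le e x → x = e
  e_R : ∀ x : W, R e x ↔ x = e

/-- A valuation on a CK-frame: each variable gets a ≤-upset containing e. -/
structure Val (F : CKFrame) where
  V : ℕ → F.W → Prop
  mono : ∀ (p : ℕ) {x y : F.W}, F.le x y → V p x → V p y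
  at_e : ∀ p : ℕ, V p F.e

/-- The forcing relation M, x ⊩ φ of a CK-model (F, V). -/
def Forces (F : CKFrame) (V : Val F) : Form → F.W → Prop
  | .var p, x => V.V p x
  | .bot, x => x = F.e
  | .and a b, x => Forces F V a x ∧ Forces F V b x
  | .or a b, x => Forces F V a x ∨ Forces F V b x
  | .imp a b, x => ∀ y : F.W, F.le x y → Forces F V a y → Forces F V b y
  | .box a, x => ∀ y z : F.W, F.le x y → F.R y z → Forces F V a z
  | .dia a, x => ∀ y : F.W, F.le x y → ∃ z : F.W, F.R y z ∧ Forces F V a z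

/-- A frame validates the consecution Γ ⊢ φ if in every model on it, every
world forcing all of Γ forces φ. -/
def ValidConseq (F : CKFrame) (Γ : Set Form) (φ : Form) : Prop :=
  ∀ (V : Val F) (x : F.W), (∀ ψ ∈ Γ, Forces F V ψ x) → Forces F V φ x

/-- A frame validates a formula φ if every world in every model on it forces φ. -/
def ValidForm (F : CKFrame) (φ : Form) : Prop :=
  ∀ (V : Val F) (x : F.W), Forces F V φ x

/-- Γ semantically entails φ on a class 𝓕 of CK-frames. -/
def SemEntails (𝓕 : Set CKFrame) (Γ : Set Form) (φ : Form) : Prop :=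
  ∀ F ∈ 𝓕, ValidConseq F Γ φ

/-- (Ndb-suff): if xRe and xRy then y = e. -/
def NdbSuff (F : CKFrame) : Prop :=
  ∀ x y : F.W, F.R x F.e → F.R x y → y = F.e

/-- (Ndb-corr). -/
def NdbCorr (F : CKFrame) : Prop :=
  ∀ x : F.W, (∀ y : F.W, F.le x y → F.R y F.e) →
    ∀ y z : F.W, F.le x y → F.R y z → z = F.e

/-- Correspondence for the weak normality axiom N_◇□ : ◇⊥ → □⊥, and
sufficiency of (Ndb-suff). -/
theorem ndb_correspondence (F : CKFrame) :
    (ValidForm F ((Form.bot.dia).imp (Form.bot.box)) ↔ NdbCorr F) ∧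
    (NdbSuff F → ValidForm F ((Form.bot.dia).imp (Form.bot.box))) := by
  constructor
  · constructor
    · intro h x hall y z hxy hyz
      have hv : Forces F ⟨fun _ _ => True, fun _ _ _ _ _ => trivial, fun _ => trivial⟩ (Form.bot.dia) x := by
        intro y' hy'
        exact ⟨F.e, hall y' hy', rfl⟩
      exact h _ x x (F.le_refl x) hv y z hxy hyz
    · intro h V x y hxy hdia y' z hyy' hy'z
      have hall : ∀ w, F.le y w → F.R w F.e := by
        intro w hw
        obtain ⟨z', hz', he⟩ := hdia w hw
        exact he ▸ hz'
      exact h y hall y' z hyy' hy'z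
  · intro h V x y hxy hdia y' z hyy' hy'z
    obtain ⟨z', hz', he⟩ := hdia y' hyy'
    exact h y' z (he ▸ hz') hy'z
end
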